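/- arXiv:1912.05618 — 3 statements merged into one kernel-verified Lean document; each statement's English description precedes it below -/
import Mathlib

section
/- Let p be a prime and let n ≥ 1 be an integer. If A ∈ GL(2, ℤ/p^nℤ) has order p^k for some integer k ≥ 0, then k ≤ n. Moreover, for every k with 1 ≤ k ≤ n there exists an element of GL(2, ℤ/p^nℤ) of order exactly p^k. -/
/-!
Reducing mod `p`, an element `A` of `p`-power order becomes a `2 × 2` matrix `B` over `𝔽_p` with
`B ^ p ^ k = 1`, i.e. `(B - 1) ^ p ^ k = 0` in characteristic `p`. A nilpotent `2 × 2` matrix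
squares to zero, so `B ^ p = 1` and `A ^ p = 1 + p C`. Each further `p`-th power gains a factor
of `p`, so `A ^ p ^ n = 1 + p ^ n D = 1`. Conversely the transvection `1 + p ^ (n - k) E₀₁` has
order `p ^ k`, the additive order of `p ^ (n - k)` in `ℤ/p^nℤ`.
-/

open Polynomial in
/-- The identity is proved in `ℤ[X]` and specialised at `c`, so `A` need not be commutative. -/
theorem one_add_natCast_mul_pow_pow_eq_one {A : Type*} [Ring A] {p t : ℕ}
    (hp : (p : A) ^ (t + 1) = 0) (c : A) : (1 + p * c) ^ p ^ t = 1 := by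
  obtain ⟨y, hy⟩ : (p ^ (t + 1) : ℤ[X]) ∣ (1 + (p : ℤ[X]) * X) ^ p ^ t - 1 ^ p ^ t :=
    dvd_sub_pow_of_dvd_sub (by simp) t
  simpa only [map_sub, map_pow, map_add, map_mul, map_one, map_natCast, aeval_X, one_pow, hp,
    zero_mul, sub_eq_zero] using congrArg (aeval c) hy

theorem ZMod.exists_eq_natCast_mul_of_castHom_eq_zero {m p : ℕ} (h : p ∣ m)
    {x : ZMod m} (hx : ZMod.castHom h (ZMod p) x = 0) : ∃ y, x = p * y := by
  rw [ZMod.castHom_apply, ← ZMod.intCast_cast, ZMod.intCast_zmod_eq_zero_iff_dvd] at hx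
  obtain ⟨y, hy⟩ := hx
  exact ⟨y, by rw [← ZMod.intCast_zmod_cast x, hy]; push_cast; rfl⟩

namespace Matrix

variable {ι : Type*} [Fintype ι] [DecidableEq ι]

theorem pow_card_eq_zero_of_isNilpotent {R : Type*} [CommRing R] [IsReduced R]
    {M : Matrix ι ι R} (hM : IsNilpotent M) : M ^ Fintype.card ι = 0 := by
  have hchar : M.charpoly = Polynomial.X ^ Fintype.card ι := sub_eq_zero.mp <|
    Polynomial.ext fun i ↦
      (Polynomial.isNilpotent_iff.mp (isNilpotent_charpoly_sub_pow_of_isNilpotent hM) i).eq_zero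
  simpa [hchar] using M.aeval_self_charpoly

theorem pow_eq_one_of_pow_prime_pow_eq_one [Nonempty ι] {K : Type*} [CommRing K] [IsReduced K]
    {p : ℕ} [Fact p.Prime] [CharP K p] (hι : Fintype.card ι ≤ p) {M : Matrix ι ι K} {k : ℕ}
    (hM : M ^ p ^ k = 1) : M ^ p = 1 := by
  have hnil : IsNilpotent (M - 1) :=
    ⟨p ^ k, by rw [sub_pow_char_pow_of_commute p k (Commute.one_right M), hM, one_pow, sub_self]⟩
  have hp : (M - 1) ^ p = 0 := pow_eq_zero_of_le hι (pow_card_eq_zero_of_isNilpotent hnil)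
  rwa [sub_pow_char_of_commute p (Commute.one_right M), one_pow, sub_eq_zero] at hp

theorem exists_eq_natCast_mul_of_map_castHom_eq_zero {m p : ℕ} (h : p ∣ m)
    {M : Matrix ι ι (ZMod m)} (hM : M.map (ZMod.castHom h (ZMod p)) = 0) :
    ∃ C, M = (p : Matrix ι ι (ZMod m)) * C := by
  choose C hC using fun i j ↦
    ZMod.exists_eq_natCast_mul_of_castHom_eq_zero h (congrFun₂ hM i j)
  refine ⟨of C, ?_⟩
  ext i j
  rw [← nsmul_eq_mul, smul_apply, hC, of_apply, nsmul_eq_mul]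

theorem pow_prime_pow_eq_one_of_pow_prime_pow_eq_one [Nonempty ι] {p n k : ℕ} (hp : p.Prime)
    (hn : 1 ≤ n) (hι : Fintype.card ι ≤ p) {M : Matrix ι ι (ZMod (p ^ n))}
    (hM : M ^ p ^ k = 1) : M ^ p ^ n = 1 := by
  have : Fact p.Prime := ⟨hp⟩
  have hpn : p ∣ p ^ n := dvd_pow_self p (by omega)
  let f := (ZMod.castHom hpn (ZMod p)).mapMatrix (m := ι)
  have hred : f M ^ p = 1 :=
    pow_eq_one_of_pow_prime_pow_eq_one hι (by rw [← map_pow, hM, map_one])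
  obtain ⟨C, hC⟩ := exists_eq_natCast_mul_of_map_castHom_eq_zero hpn (M := M ^ p - 1)
    (by rw [← RingHom.mapMatrix_apply, map_sub, map_pow, hred, map_one, sub_self])
  have hpn0 : (p : Matrix ι ι (ZMod (p ^ n))) ^ (n - 1 + 1) = 0 := by
    rw [Nat.sub_add_cancel hn, ← Nat.cast_pow, CharP.cast_eq_zero]
  calc M ^ p ^ n = (1 + p * C) ^ p ^ (n - 1) := by
        rw [← hC, add_sub_cancel, ← pow_mul, ← pow_succ', Nat.sub_add_cancel hn]
    _ = 1 := one_add_natCast_mul_pow_pow_eq_one hpn0 C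

theorem SpecialLinearGroup.orderOf_transvection {F : Type*} [CommRing F] {i j : ι} (hij : i ≠ j)
    (b : F) : orderOf (transvection hij b) = addOrderOf b := by
  let φ : Multiplicative F →* SpecialLinearGroup ι F :=
    MonoidHom.mk' (fun a ↦ transvection hij a.toAdd) (fun _ _ ↦ transvection_add hij _ _)
  have hφ : Function.Injective φ := fun a b hab ↦ by
    simpa [φ, transvection_coe, hij] using congrArg (fun g : SpecialLinearGroup ι F ↦ g i j) hab
  rw [← orderOf_ofAdd_eq_addOrderOf, ← orderOf_injective φ hφ]
  rfl

end Matrix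

theorem ZMod.addOrderOf_natCast_of_dvd {d m : ℕ} (hm : m ≠ 0) (h : d ∣ m) :
    addOrderOf (d : ZMod m) = m / d := by
  rw [addOrderOf_coe d hm, Nat.gcd_eq_right h]

theorem orders_of_p_power_elements_GL2 (p n : ℕ) (hp : p.Prime) (hn : 1 ≤ n) :
    (∀ (A : GL (Fin 2) (ZMod (p ^ n))) (k : ℕ), orderOf A = p ^ k → k ≤ n) ∧
    (∀ k : ℕ, 1 ≤ k → k ≤ n → ∃ A : GL (Fin 2) (ZMod (p ^ n)), orderOf A = p ^ k) := by
  open Matrix SpecialLinearGroup in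
  refine ⟨fun A k hk ↦ ?_, fun k _ hkn ↦ ?_⟩
  · have hAk : (A : Matrix (Fin 2) (Fin 2) (ZMod (p ^ n))) ^ p ^ k = 1 := by
      rw [← Units.val_pow_eq_pow_val, ← hk, pow_orderOf_eq_one, Units.val_one]
    have hAn : A ^ p ^ n = 1 := Units.ext <| by
      simpa using pow_prime_pow_eq_one_of_pow_prime_pow_eq_one hp hn (by simpa using hp.two_le) hAk
    have hdvd : p ^ k ∣ p ^ n := hk ▸ orderOf_dvd_of_pow_eq_one hAn
    exact (Nat.pow_dvd_pow_iff_le_right hp.one_lt).mp hdvd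
  · refine ⟨toGL (transvection (zero_ne_one' (Fin 2)) ((p ^ (n - k) : ℕ) : ZMod (p ^ n))), ?_⟩
    rw [orderOf_injective _ toGL_injective, orderOf_transvection,
      ZMod.addOrderOf_natCast_of_dvd (pow_ne_zero _ hp.ne_zero) (pow_dvd_pow p (by omega)),
      Nat.pow_div (by omega) hp.pos, Nat.sub_sub_self hkn]
end

section
/- Let p be a prime, let n ≥ 1 be an integer, and let A ∈ GL(2, ℤ/p^nℤ) be a matrix whose order is divisible by φ(p^{n+1}) = p^n(p−1). Then the reduction of det(A) modulo p is a square in ℤ/pℤ. -/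
/-!
Reduce `A` modulo `p` to `B ∈ GL₂(𝔽_p)`. The kernel of the reduction has exponent `p^(n-1)`,
so `p^n ∣ ord A` forces `p ∣ ord B`, and a suitable power `C` of `B` has order exactly `p`.
Then `N = C - 1` is a nonzero nilpotent, hence `N² = 0`, and `B` commutes with `N`. A matrix
commuting with a nonzero square-zero `2 × 2` matrix is of the form `x + yN`, whose
determinant is `x²`.
-/

open Matrix Polynomial

lemma one_add_mul_pow_prime_pow_eq_one {R : Type*} [Ring R] {p k : ℕ}
    (hp : (p : R) ^ (k + 1) = 0) (K : R) : (1 + p * K) ^ p ^ k = 1 := by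
  -- `R` need not be commutative: prove the divisibility in `ℤ[X]` and evaluate at `K`.
  obtain ⟨Q, hQ⟩ := dvd_sub_pow_of_dvd_sub (p := p) (a := 1 + (p : ℤ[X]) * X) (b := 1)
    (by simp) k
  have := congrArg (aeval K) hQ
  simpa [hp, sub_eq_zero] using this

lemma ZMod.exists_eq_mul_of_castHom_eq_zero {m n : ℕ} (h : m ∣ n) {x : ZMod n}
    (hx : ZMod.castHom h (ZMod m) x = 0) : ∃ y, x = m * y := by
  obtain ⟨z, rfl⟩ := ZMod.intCast_surjective x
  rw [map_intCast, ZMod.intCast_zmod_eq_zero_iff_dvd] at hx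
  obtain ⟨w, rfl⟩ := hx
  exact ⟨w, by push_cast; rfl⟩

lemma Matrix.exists_eq_one_add_mul_of_map_castHom_eq_one {ι : Type*} [Fintype ι] [DecidableEq ι]
    {m n : ℕ} (h : m ∣ n) {M : Matrix ι ι (ZMod n)}
    (hM : M.map (ZMod.castHom h (ZMod m)) = 1) :
    ∃ K, M = 1 + (m : Matrix ι ι (ZMod n)) * K := by
  have hentry (i j : ι) : ZMod.castHom h (ZMod m) ((M - 1) i j) = 0 := by
    have := congrFun₂ hM i j
    by_cases hij : i = j <;> simp_all [one_apply]
  choose K hK using fun i j => ZMod.exists_eq_mul_of_castHom_eq_zero h (hentry i j)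
  refine ⟨of K, ?_⟩
  rw [← sub_eq_iff_eq_add', ← nsmul_eq_mul]
  ext i j
  simp [hK]

lemma Matrix.GeneralLinearGroup.pow_prime_pow_eq_one_of_map_castHom_eq_one {ι : Type*} [Fintype ι]
    [DecidableEq ι] {p n : ℕ} (hn : n ≠ 0) {g : GL ι (ZMod (p ^ n))}
    (hg : map (ZMod.castHom (dvd_pow_self p hn) (ZMod p)) g = 1) : g ^ p ^ (n - 1) = 1 := by
  obtain ⟨K, hK⟩ := exists_eq_one_add_mul_of_map_castHom_eq_one (dvd_pow_self p hn)
    (congrArg Units.val hg)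
  have hpn : (p : Matrix ι ι (ZMod (p ^ n))) ^ (n - 1 + 1) = 0 := by
    rw [Nat.sub_add_cancel (Nat.one_le_iff_ne_zero.mpr hn), ← Nat.cast_pow,
      ← map_natCast (Matrix.scalar ι), ZMod.natCast_self, map_zero]
  ext1
  rw [Units.val_pow_eq_pow_val, Units.val_one]
  exact hK ▸ one_add_mul_pow_prime_pow_eq_one hpn K

lemma Matrix.GeneralLinearGroup.dvd_orderOf_map_castHom {ι : Type*} [Fintype ι] [DecidableEq ι]
    {p n : ℕ} (hp : p ≠ 0) (hn : n ≠ 0) {g : GL ι (ZMod (p ^ n))}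
    (hg : p ^ n ∣ orderOf g) :
    p ∣ orderOf (map (ZMod.castHom (dvd_pow_self p hn) (ZMod p)) g) := by
  set k := orderOf (map (ZMod.castHom (dvd_pow_self p hn) (ZMod p)) g)
  have hgk : orderOf g ∣ k * p ^ (n - 1) := by
    refine orderOf_dvd_of_pow_eq_one ?_
    rw [pow_mul]
    exact pow_prime_pow_eq_one_of_map_castHom_eq_one hn (by rw [map_pow, pow_orderOf_eq_one])
  refine Nat.dvd_of_mul_dvd_mul_left (pow_pos (Nat.pos_of_ne_zero hp) (n - 1)) ?_
  rw [← pow_succ, Nat.sub_add_cancel (Nat.one_le_iff_ne_zero.mpr hn), mul_comm]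
  exact hg.trans hgk

section SquareZero

variable {F : Type*} [Field F]

lemma Matrix.det_eq_sq_of_commute_of_mul_self_eq_zero {N B : Matrix (Fin 2) (Fin 2) F}
    (hN : N * N = 0) (hBN : Commute B N) (h01 : N 0 1 ≠ 0) :
    B.det = (B 1 1 + N 0 0 * B 0 1 / N 0 1) ^ 2 := by
  -- `B = x + y N` with `y = B 0 1 / N 0 1`; the witness is `x`, read off from the entry `(1, 1)`.
  have hN' := congrFun₂ hN
  have hBN' := congrFun₂ hBN.eq
  simp only [mul_apply, Fin.sum_univ_two, zero_apply] at hN' hBN'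
  have htr : N 0 0 + N 1 1 = 0 :=
    (mul_eq_zero.mp (by linear_combination hN' 0 1)).resolve_left h01
  rw [det_fin_two]
  field_simp
  linear_combination (B 1 1 * N 0 1) * hBN' 0 1 + (B 0 1 * N 0 1) * hBN' 0 0
    - B 0 1 ^ 2 * hN' 0 0 - B 1 1 * B 0 1 * N 0 1 * htr

lemma Matrix.exists_det_eq_sq_of_commute_of_mul_self_eq_zero {N B : Matrix (Fin 2) (Fin 2) F}
    (hN : N * N = 0) (hN0 : N ≠ 0) (hBN : Commute B N) : ∃ x, B.det = x ^ 2 := by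
  by_cases h01 : N 0 1 = 0
  · -- Both off-diagonal entries vanishing would make `N` zero, as `(N * N) i i = N i i ^ 2`.
    have h10 : Nᵀ 0 1 ≠ 0 := by
      contrapose! hN0
      have hN' := congrFun₂ hN
      simp only [mul_apply, Fin.sum_univ_two, zero_apply, transpose_apply] at hN' hN0
      ext i j
      fin_cases i <;> fin_cases j <;> simp_all
    have hBN : Commute Bᵀ Nᵀ := by
      rw [Commute, SemiconjBy, ← transpose_mul, ← transpose_mul, hBN.eq]
    have hNt : Nᵀ * Nᵀ = 0 := by rw [← transpose_mul, hN, transpose_zero]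
    exact ⟨_, by
      rw [← det_transpose]; exact det_eq_sq_of_commute_of_mul_self_eq_zero hNt hBN h10⟩
  · exact ⟨_, det_eq_sq_of_commute_of_mul_self_eq_zero hN hBN h01⟩

lemma Matrix.pow_card_eq_zero_of_isNilpotent_s12 {R : Type*} [CommRing R] [IsDomain R] {ι : Type*}
    [Fintype ι] [DecidableEq ι] {M : Matrix ι ι R} (hM : IsNilpotent M) :
    M ^ Fintype.card ι = 0 := by
  have hchar := sub_eq_zero.mp (isNilpotent_charpoly_sub_pow_of_isNilpotent hM).eq_zero
  simpa [hchar] using M.aeval_self_charpoly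

lemma Matrix.exists_det_eq_sq_of_commute_of_pow_char_eq_one (p : ℕ) [Fact p.Prime] [CharP F p]
    {B C : Matrix (Fin 2) (Fin 2) F} (hC : C ^ p = 1) (hC1 : C ≠ 1) (hBC : Commute B C) :
    ∃ x, B.det = x ^ 2 := by
  have hnil : IsNilpotent (C - 1) :=
    ⟨p, by rw [sub_pow_char_of_commute (p := p) (Commute.one_right C), hC, one_pow, sub_self]⟩
  have hsq : (C - 1) * (C - 1) = 0 := by
    simpa [sq] using pow_card_eq_zero_of_isNilpotent_s12 hnil
  exact exists_det_eq_sq_of_commute_of_mul_self_eq_zero hsq (sub_ne_zero.mpr hC1)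
    (hBC.sub_right (Commute.one_right B))

lemma Matrix.GeneralLinearGroup.exists_det_eq_sq_of_dvd_orderOf [Finite F] (p : ℕ) [Fact p.Prime]
    [CharP F p] (B : GL (Fin 2) F) (hB : p ∣ orderOf B) :
    ∃ x, (B : Matrix (Fin 2) (Fin 2) F).det = x ^ 2 := by
  set C := B ^ (orderOf B / p)
  have hC : orderOf C = p := orderOf_pow_orderOf_div (orderOf_pos B).ne' hB
  refine exists_det_eq_sq_of_commute_of_pow_char_eq_one p (C := C) ?_ ?_ ?_
  · rw [← Units.val_pow_eq_pow_val, ← hC, pow_orderOf_eq_one, Units.val_one]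
  · rw [Ne, ← Units.val_one, Units.val_inj, ← orderOf_eq_one_iff, hC]
    exact (Fact.out : p.Prime).ne_one
  · exact ((Commute.refl B).pow_right _).units_val

end SquareZero

theorem det_is_square_of_large_order (p n : ℕ) (hp : p.Prime) (hn : 1 ≤ n)
    (A : GL (Fin 2) (ZMod (p ^ n)))
    (hA : Nat.totient (p ^ (n + 1)) ∣ orderOf A) :
    ∃ b : ZMod p,
      ZMod.castHom (dvd_pow_self p (Nat.one_le_iff_ne_zero.mp hn)) (ZMod p)
        ((A : Matrix (Fin 2) (Fin 2) (ZMod (p ^ n))).det) = b ^ 2 := by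
  have := Fact.mk hp
  have hpn : p ^ n ∣ orderOf A :=
    (Nat.totient_prime_pow_succ hp n ▸ dvd_mul_right _ _).trans hA
  obtain ⟨b, hb⟩ := GeneralLinearGroup.exists_det_eq_sq_of_dvd_orderOf p _
    (GeneralLinearGroup.dvd_orderOf_map_castHom hp.ne_zero (by omega) hpn)
  exact ⟨b, by rw [RingHom.map_det]; exact hb⟩
end

section
/- Let p be an odd prime and let N_s(p) be the subgroup of GL(2, ℤ/pℤ) consisting of all matrices that are either diagonal or antidiagonal (the normalizer of the split Cartan subgroup). Let G be a subgroup of N_s(p) such that the determinant map det : G → (ℤ/pℤ)^× is surjective and such that the commutator subgroup G′ = [G,G] is nontrivial. Then G/G′ is isomorphic to (ℤ/pℤ)^×, or to (ℤ/pℤ)^× × ℤ/2ℤ, or to ℤ/2(p−1)ℤ. Moreover, if G contains an element of trace 0 and determinant −1, then G/G′ is isomorphic to (ℤ/pℤ)^× or to (ℤ/pℤ)^× × ℤ/2ℤ. -/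
/-!
Let `H` be the subgroup of diagonal matrices of `G`. Since `G` is not abelian it contains
an antidiagonal matrix `w`, and `H` has index 2. As `H` is abelian and normal, `h ↦ [w, h]`
is a homomorphism `H → [G, G]` whose kernel, the centralizer of `w` in `H`, consists of
scalar matrices. Hence `|G / [G, G]| ≤ 2 (p - 1)`, and the determinant maps `G / [G, G]` onto
the cyclic group `(ℤ/pℤ)ˣ` of order `p - 1` with kernel of order at most 2, which leaves the
three possibilities. In the cyclic case the unique involution of `G / [G, G]` has
determinant 1, whereas an element of trace 0 and determinant -1 is an involution
(Cayley–Hamilton) of determinant `-1 ≠ 1`.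
-/

open Function Matrix
open scoped commutatorElement

section CyclicExtension

variable {E C : Type*} [CommGroup E] [Group C]

theorem MonoidHom.map_eq_one_of_sq_eq_one [Finite E] [IsCyclic E] (δ : E →* C)
    (hE : Nat.card E = 2 * Nat.card C) {t : E} (ht : t ^ 2 = 1) : δ t = 1 := by
  obtain ⟨g, hg⟩ := IsCyclic.exists_monoid_generator (α := E)
  obtain ⟨k, rfl⟩ := Submonoid.mem_powers_iff _ _ |>.mp (hg t)
  have hgk : 2 * Nat.card C ∣ 2 * k := by
    rw [← hE, ← orderOf_eq_card_of_forall_mem_zpowers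
      (fun x => mem_powers_iff_mem_zpowers.mp (hg x))]
    exact orderOf_dvd_of_pow_eq_one (by rw [pow_mul', ht])
  obtain ⟨m, rfl⟩ := Nat.dvd_of_mul_dvd_mul_left two_pos hgk
  rw [map_pow, pow_mul, pow_card_eq_one', one_pow]

theorem MonoidHom.nonempty_mulEquiv_prod_zmod_two [Finite E] [Finite C] (δ : E →* C)
    (hE : Nat.card E = 2 * Nat.card C) {x : E} (hx : orderOf x = Nat.card C)
    (hδx : orderOf (δ x) = Nat.card C) : Nonempty (E ≃* C × Multiplicative (ZMod 2)) := by
  have hQ : Nat.card (E ⧸ Subgroup.zpowers x) = 2 := by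
    have := Subgroup.card_eq_card_quotient_mul_card_subgroup (Subgroup.zpowers x)
    rw [hE, Nat.card_zpowers, hx] at this
    exact (Nat.eq_of_mul_eq_mul_right Nat.card_pos this).symm
  have hinj : Injective (δ.prod (QuotientGroup.mk' (Subgroup.zpowers x))) := by
    rw [← MonoidHom.ker_eq_bot_iff, eq_bot_iff]
    rintro e he
    obtain ⟨hδe, hxe⟩ := Prod.mk_eq_one.mp he
    obtain ⟨k, rfl⟩ := (QuotientGroup.eq_one_iff e).mp hxe
    rwa [map_zpow, ← orderOf_dvd_iff_zpow_eq_one, hδx, ← hx,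
      orderOf_dvd_iff_zpow_eq_one] at hδe
  have hbij : Bijective (δ.prod (QuotientGroup.mk' (Subgroup.zpowers x))) :=
    (Nat.bijective_iff_injective_and_card _).mpr ⟨hinj, by rw [Nat.card_prod, hQ, hE, mul_comm]⟩
  have : IsCyclic (E ⧸ Subgroup.zpowers x) := isCyclic_of_prime_card hQ
  exact ⟨(MulEquiv.ofBijective _ hbij).trans <| MulEquiv.prodCongr (MulEquiv.refl C) <|
    mulEquivOfCyclicCardEq (G' := Multiplicative (ZMod 2)) (by simp [hQ])⟩

theorem MonoidHom.nonempty_mulEquiv_of_card_le_two_mul [Finite E] [Finite C] [IsCyclic C]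
    (δ : E →* C) (hδ : Surjective δ) (hE : Nat.card E ≤ 2 * Nat.card C) :
    Nonempty (E ≃* C) ∨ Nonempty (E ≃* C × Multiplicative (ZMod 2)) ∨
      (Nonempty (E ≃* Multiplicative (ZMod (2 * Nat.card C))) ∧
        ∀ t : E, t ^ 2 = 1 → δ t = 1) := by
  have hker : Nat.card E = Nat.card δ.ker * Nat.card C := by
    rw [← δ.ker.card_mul_index, Subgroup.index_ker, MonoidHom.range_eq_top.mpr hδ,
      Subgroup.card_top]
  have hC : 0 < Nat.card C := Nat.card_pos
  have hker_le : Nat.card δ.ker ≤ 2 := by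
    rw [hker] at hE
    exact le_of_mul_le_mul_right hE hC
  interval_cases hk : Nat.card δ.ker
  · exact absurd hk Nat.card_pos.ne'
  · refine Or.inl ⟨MulEquiv.ofBijective δ ⟨?_, hδ⟩⟩
    rw [← MonoidHom.ker_eq_bot_iff]
    exact Subgroup.card_eq_one.mp hk
  · obtain ⟨g, hg⟩ := IsCyclic.exists_ofOrder_eq_natCard (α := C)
    obtain ⟨x, rfl⟩ := hδ g
    obtain ⟨m, hm⟩ : Nat.card C ∣ orderOf x := hg ▸ orderOf_map_dvd δ x
    have hm2 : m ∣ 2 := by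
      have := hker ▸ orderOf_dvd_natCard x
      rw [hm, mul_comm 2] at this
      exact Nat.dvd_of_mul_dvd_mul_left hC this
    rcases (Nat.dvd_prime Nat.prime_two).mp hm2 with rfl | rfl
    · exact Or.inr (Or.inl (δ.nonempty_mulEquiv_prod_zmod_two hker (by rw [hm, mul_one]) hg))
    · have hx : orderOf x = Nat.card E := by rw [hm, hker, mul_comm]
      have : IsCyclic E := isCyclic_of_orderOf_eq_card x hx
      refine Or.inr (Or.inr ⟨⟨mulEquivOfCyclicCardEq (by simp [hker])⟩,
        fun t ht => δ.map_eq_one_of_sq_eq_one hker ht⟩)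

end CyclicExtension

theorem Subgroup.card_le_card_commutator_mul_card_centralizer {G : Type*} [Group G] [Finite G]
    (H : Subgroup G) [IsMulCommutative H] [hH : H.Normal] (w : G) :
    Nat.card H ≤ Nat.card (_root_.commutator G) * Nat.card ((centralizer {w}).subgroupOf H) := by
  let f : H →* G := MonoidHom.mk' (fun h => ⁅w, (h : G)⁆) fun a b => by
    have hb : w * b * w⁻¹ * (b : G)⁻¹ ∈ H := H.mul_mem (hH.conj_mem b b.2 w) (H.inv_mem b.2)
    have hcomm :
        w * b * w⁻¹ * (b : G)⁻¹ * (a : G)⁻¹ = (a : G)⁻¹ * (w * b * w⁻¹ * (b : G)⁻¹) :=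
      setLike_mul_comm hb (H.inv_mem a.2)
    simp only [commutatorElement_def, Subgroup.coe_mul]
    calc w * (a * b) * w⁻¹ * ((a : G) * b)⁻¹
        = w * a * w⁻¹ * ((w * b * w⁻¹ * (b : G)⁻¹) * (a : G)⁻¹) := by group
      _ = w * a * w⁻¹ * (a : G)⁻¹ * (w * b * w⁻¹ * (b : G)⁻¹) := by rw [hcomm]; group
  have hrange : f.range ≤ _root_.commutator G := by
    rintro _ ⟨h, rfl⟩
    exact Subgroup.commutator_mem_commutator (mem_top w) (mem_top (h : G))
  have hker : f.ker = (centralizer {w}).subgroupOf H := by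
    ext h
    simp [f, mem_subgroupOf, mem_centralizer_singleton_iff, commutatorElement_eq_one_iff_mul_comm,
      eq_comm]
  calc Nat.card H = Nat.card f.ker * Nat.card f.range := by rw [← f.ker.card_mul_index, index_ker]
    _ ≤ Nat.card f.ker * Nat.card (_root_.commutator G) :=
      Nat.mul_le_mul_left _ (card_le_of_le hrange)
    _ = _ := by rw [hker, mul_comm]

namespace Matrix

def IsAntidiagonal {R : Type*} [Zero R] (A : Matrix (Fin 2) (Fin 2) R) : Prop :=
  A 0 0 = 0 ∧ A 1 1 = 0

theorem sq_eq_one_of_trace_eq_zero_of_det_eq_neg_one {R : Type*} [CommRing R]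
    {A : Matrix (Fin 2) (Fin 2) R} (htr : A.trace = 0) (hdet : A.det = -1) : A ^ 2 = 1 := by
  rw [trace_fin_two] at htr
  rw [det_fin_two] at hdet
  ext i j
  fin_cases i <;> fin_cases j <;> simp only [sq, mul_apply, Fin.sum_univ_two] <;> simp
  · linear_combination A 0 0 * htr - hdet
  · linear_combination A 0 1 * htr
  · linear_combination A 1 0 * htr
  · linear_combination A 1 1 * htr - hdet

namespace GeneralLinearGroup

section CommRing

variable (R : Type*) [CommRing R]

def splitCartan : Subgroup (GL (Fin 2) R) where
  carrier := {A | (A : Matrix (Fin 2) (Fin 2) R) 0 1 = 0 ∧ (A : Matrix (Fin 2) (Fin 2) R) 1 0 = 0}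
  mul_mem' := by
    rintro A B ⟨hA01, hA10⟩ ⟨hB01, hB10⟩
    simp [mul_apply, Fin.sum_univ_two, hA01, hA10, hB01, hB10]
  one_mem' := by simp
  inv_mem' := by
    rintro A ⟨h01, h10⟩
    simp [coe_units_inv, inv_def, adjugate_fin_two, h01, h10]

instance : IsMulCommutative (splitCartan R) :=
  .of_setLike_mul_comm fun A ⟨hA01, hA10⟩ B ⟨hB01, hB10⟩ => by
    ext i j
    fin_cases i <;> fin_cases j <;>
      simp [mul_apply, Fin.sum_univ_two, hA01, hA10, hB01, hB10, mul_comm]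

variable {R}

theorem mul_mem_splitCartan_of_isAntidiagonal {A B : GL (Fin 2) R}
    (hA : IsAntidiagonal (A : Matrix (Fin 2) (Fin 2) R))
    (hB : IsAntidiagonal (B : Matrix (Fin 2) (Fin 2) R)) : A * B ∈ splitCartan R := by
  obtain ⟨hA00, hA11⟩ := hA
  obtain ⟨hB00, hB11⟩ := hB
  constructor <;> simp [mul_apply, Fin.sum_univ_two, hA00, hA11, hB00, hB11]

theorem notMem_splitCartan_of_isAntidiagonal [Nontrivial R] {A : GL (Fin 2) R}
    (hA : IsAntidiagonal (A : Matrix (Fin 2) (Fin 2) R)) : A ∉ splitCartan R := by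
  rintro ⟨h01, h10⟩
  apply A.ne_zero
  ext i j
  fin_cases i <;> fin_cases j <;> simp [hA.1, hA.2, h01, h10]

end CommRing

variable {K : Type*} [Field K]

theorem val_zero_zero_ne_zero_of_mem_splitCartan {A : GL (Fin 2) K} (hA : A ∈ splitCartan K) :
    (A : Matrix (Fin 2) (Fin 2) K) 0 0 ≠ 0 := by
  intro h
  apply A.det_ne_zero
  rw [det_fin_two, h, hA.1]
  ring

theorem val_zero_one_ne_zero_of_isAntidiagonal {A : GL (Fin 2) K}
    (hA : IsAntidiagonal (A : Matrix (Fin 2) (Fin 2) K)) :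
    (A : Matrix (Fin 2) (Fin 2) K) 0 1 ≠ 0 := by
  intro h
  apply A.det_ne_zero
  rw [det_fin_two, h, hA.1]
  ring

theorem val_zero_zero_eq_val_one_one_of_commute {A w : GL (Fin 2) K} (hA : A ∈ splitCartan K)
    (hw : IsAntidiagonal (w : Matrix (Fin 2) (Fin 2) K)) (hAw : Commute A w) :
    (A : Matrix (Fin 2) (Fin 2) K) 0 0 = (A : Matrix (Fin 2) (Fin 2) K) 1 1 := by
  have h01 := congrArg (fun M : GL (Fin 2) K => (M : Matrix (Fin 2) (Fin 2) K) 0 1) hAw.eq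
  simp only [coe_mul, mul_apply, Fin.sum_univ_two, hA.1, hw.1, hw.2, mul_zero, add_zero,
    zero_add] at h01
  exact mul_right_cancel₀ (val_zero_one_ne_zero_of_isAntidiagonal hw) (h01.trans (mul_comm _ _))

theorem eq_of_commute_of_val_zero_zero_eq {A B w : GL (Fin 2) K} (hA : A ∈ splitCartan K)
    (hB : B ∈ splitCartan K) (hw : IsAntidiagonal (w : Matrix (Fin 2) (Fin 2) K))
    (hAw : Commute A w) (hBw : Commute B w)
    (h : (A : Matrix (Fin 2) (Fin 2) K) 0 0 = (B : Matrix (Fin 2) (Fin 2) K) 0 0) : A = B := by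
  have hA11 := val_zero_zero_eq_val_one_one_of_commute hA hw hAw
  have hB11 := val_zero_zero_eq_val_one_one_of_commute hB hw hBw
  ext i j
  fin_cases i <;> fin_cases j <;> simp [hA.1, hA.2, hB.1, hB.2, ← hA11, ← hB11, h]

theorem card_centralizer_subgroupOf_splitCartan_le [Finite K] {G : Subgroup (GL (Fin 2) K)}
    {w : G}
    (hw : IsAntidiagonal ((w : GL (Fin 2) K) : Matrix (Fin 2) (Fin 2) K)) :
    Nat.card ((Subgroup.centralizer {w}).subgroupOf ((splitCartan K).subgroupOf G)) ≤
      Nat.card Kˣ := by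
  refine Nat.card_le_card_of_injective
    (fun A => Units.mk0 ((A.1.1.1 : Matrix (Fin 2) (Fin 2) K) 0 0)
      (val_zero_zero_ne_zero_of_mem_splitCartan A.1.2)) ?_
  rintro ⟨⟨⟨A, hAG⟩, hA⟩, hAw⟩ ⟨⟨⟨B, hBG⟩, hB⟩, hBw⟩ hAB
  have hAw' : Commute A w := congrArg Subtype.val (Subgroup.mem_centralizer_singleton_iff.mp hAw)
  have hBw' : Commute B w := congrArg Subtype.val (Subgroup.mem_centralizer_singleton_iff.mp hBw)
  have := eq_of_commute_of_val_zero_zero_eq hA hB hw hAw' hBw' (congrArg Units.val hAB)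
  subst this
  rfl

section Normalizer

variable {G : Subgroup (GL (Fin 2) K)}
  (hG : ∀ A ∈ G, A ∈ splitCartan K ∨ IsAntidiagonal (A : Matrix (Fin 2) (Fin 2) K))
include hG

theorem exists_isAntidiagonal_of_commutator_ne_bot (hG' : commutator G ≠ ⊥) :
    ∃ w ∈ G, IsAntidiagonal (w : Matrix (Fin 2) (Fin 2) K) := by
  by_contra! h
  have hle : G ≤ splitCartan K := fun A hA => (hG A hA).resolve_right (h A hA)
  have : IsMulCommutative G :=
    .of_setLike_mul_comm fun _ hA _ hB => setLike_mul_comm (hle hA) (hle hB)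
  exact hG' (commutator_eq_bot G)

theorem index_splitCartan_subgroupOf {w : GL (Fin 2) K} (hwG : w ∈ G)
    (hw : IsAntidiagonal (w : Matrix (Fin 2) (Fin 2) K)) :
    ((splitCartan K).subgroupOf G).index = 2 := by
  refine Subgroup.index_eq_two_iff.mpr ⟨⟨w, hwG⟩, fun A => ?_⟩
  simp only [Subgroup.mem_subgroupOf, Subgroup.coe_mul]
  rcases hG A A.2 with hA | hA
  · refine Or.inr ⟨hA, fun hAw => notMem_splitCartan_of_isAntidiagonal hw ?_⟩
    simpa using (splitCartan K).mul_mem ((splitCartan K).inv_mem hA) hAw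
  · exact Or.inl
      ⟨mul_mem_splitCartan_of_isAntidiagonal hA hw, notMem_splitCartan_of_isAntidiagonal hA⟩

theorem card_abelianization_le [Finite K] (hG' : commutator G ≠ ⊥) :
    Nat.card (Abelianization G) ≤ 2 * Nat.card Kˣ := by
  obtain ⟨w, hwG, hw⟩ := exists_isAntidiagonal_of_commutator_ne_bot hG hG'
  set H := (splitCartan K).subgroupOf G
  have hindex : H.index = 2 := index_splitCartan_subgroupOf hG hwG hw
  have : H.Normal := Subgroup.normal_of_index_eq_two hindex
  have hH := H.card_le_card_commutator_mul_card_centralizer ⟨w, hwG⟩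
  have hcentr := card_centralizer_subgroupOf_splitCartan_le (w := ⟨w, hwG⟩) hw
  refine Nat.le_of_mul_le_mul_right (c := Nat.card (commutator G)) ?_ Nat.card_pos
  calc Nat.card (Abelianization G) * Nat.card (commutator G) = Nat.card G :=
        (Subgroup.card_eq_card_quotient_mul_card_subgroup _).symm
    _ = Nat.card H * 2 := by rw [← H.card_mul_index, hindex]
    _ ≤ Nat.card (commutator G) * Nat.card Kˣ * 2 := by gcongr; exact hH.trans (by gcongr)
    _ = 2 * Nat.card Kˣ * Nat.card (commutator G) := by ring

end Normalizer

end GeneralLinearGroup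

end Matrix

open Matrix.GeneralLinearGroup

theorem abelianization_of_normalizer_split_cartan_subgroup (p : ℕ) (hp : p.Prime) (hodd : p ≠ 2)
    (G : Subgroup (GL (Fin 2) (ZMod p)))
    (hNs : ∀ A ∈ G,
      ((A : Matrix (Fin 2) (Fin 2) (ZMod p)) 0 1 = 0 ∧
        (A : Matrix (Fin 2) (Fin 2) (ZMod p)) 1 0 = 0) ∨
      ((A : Matrix (Fin 2) (Fin 2) (ZMod p)) 0 0 = 0 ∧
        (A : Matrix (Fin 2) (Fin 2) (ZMod p)) 1 1 = 0))
    (hdet : ∀ u : (ZMod p)ˣ, ∃ A ∈ G, (A : Matrix (Fin 2) (Fin 2) (ZMod p)).det = u)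
    (hG' : commutator ↥G ≠ ⊥) :
    (Nonempty (Abelianization ↥G ≃* (ZMod p)ˣ) ∨
      Nonempty (Abelianization ↥G ≃* (ZMod p)ˣ × Multiplicative (ZMod 2)) ∨
      Nonempty (Abelianization ↥G ≃* Multiplicative (ZMod (2 * (p - 1))))) ∧
    ((∃ τ ∈ G, Matrix.trace (τ : Matrix (Fin 2) (Fin 2) (ZMod p)) = 0 ∧
        (τ : Matrix (Fin 2) (Fin 2) (ZMod p)).det = -1) →
      (Nonempty (Abelianization ↥G ≃* (ZMod p)ˣ) ∨
        Nonempty (Abelianization ↥G ≃* (ZMod p)ˣ × Multiplicative (ZMod 2)))) := by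
  have : Fact p.Prime := ⟨hp⟩
  let δ : Abelianization G →* (ZMod p)ˣ := Abelianization.lift (det.comp G.subtype)
  have hδ : Function.Surjective δ := fun u => by
    obtain ⟨A, hA, hAu⟩ := hdet u
    exact ⟨.of ⟨A, hA⟩, Units.ext hAu⟩
  have hclass := δ.nonempty_mulEquiv_of_card_le_two_mul hδ (card_abelianization_le hNs hG')
  rw [Nat.card_eq_fintype_card, ZMod.card_units] at hclass
  refine ⟨hclass.imp_right (Or.imp_right And.left), ?_⟩
  rintro ⟨τ, hτG, htr, hτdet⟩
  refine hclass.imp_right (Or.resolve_right · ?_)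
  rintro ⟨-, hinv⟩
  have hτ2 : (⟨τ, hτG⟩ : G) ^ 2 = 1 :=
    Subtype.ext <| Units.ext <| by
      simpa using sq_eq_one_of_trace_eq_zero_of_det_eq_neg_one htr hτdet
  have hτ : δ (.of ⟨τ, hτG⟩) = 1 := hinv _ (by rw [← map_pow, hτ2, map_one])
  exact Ring.neg_one_ne_one_of_char_ne_two (by rwa [ZMod.ringChar_zmod_n])
    (hτdet.symm.trans (congrArg Units.val hτ))
end
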